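/- For every integer j with 1 ≤ j ≤ n and every z ∈ ℂ with z ≠ 0 and zI−A_p invertible, C_{d,j} (zI−Ã)^{−1} B̃ = z^{−j}. -/

import Mathlib

open Matrix Finset

noncomputable section

/-- The lifted matrix `Ã = [[A_p, B_p, 0],[0, 0, I_{n-1}],[0, 0, 0]]`. -/
def Atil (np n : ℕ) (Ap : Matrix (Fin np) (Fin np) ℝ) (Bp : Matrix (Fin np) (Fin 1) ℝ) :
    Matrix (Fin np ⊕ Fin n) (Fin np ⊕ Fin n) ℝ :=
  Matrix.fromBlocks Ap
    (Matrix.of fun i (j : Fin n) => if (j : ℕ) = 0 then Bp i 0 else 0) 0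
    (Matrix.of fun (i j : Fin n) => if (j : ℕ) = (i : ℕ) + 1 then (1 : ℝ) else 0)

/-- The lifted input matrix `B̃ = (0,…,0,1)ᵀ`. -/
def Btil (np n : ℕ) : Matrix (Fin np ⊕ Fin n) (Fin 1) ℝ :=
  Matrix.of fun i _ =>
    Sum.elim (fun _ => (0 : ℝ)) (fun j : Fin n => if (j : ℕ) = n - 1 then 1 else 0) i

/-- The row vector `C_{d,j}` whose only nonzero entry is a `1` in position
`n_p + n - j + 1` (1-based), i.e. at index `n - j` (0-based) among the last `n`
coordinates. -/
def Cdrow (np n : ℕ) (j : ℕ) : Matrix (Fin 1) (Fin np ⊕ Fin n) ℝ :=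
  Matrix.of fun _ idx =>
    Sum.elim (fun _ => (0 : ℝ)) (fun r : Fin n => if (r : ℕ) = n - j then 1 else 0) idx

/-- shift matrix -/
def Nmat (n : ℕ) : Matrix (Fin n) (Fin n) ℂ :=
  Matrix.of fun (i j : Fin n) => if (j : ℕ) = (i : ℕ) + 1 then (1 : ℂ) else 0

def Emat (n : ℕ) (z : ℂ) : Matrix (Fin n) (Fin n) ℂ :=
  Matrix.of fun (i k : Fin n) =>
    if (i : ℕ) ≤ (k : ℕ) then z ^ (-(((k : ℕ) : ℤ) - ((i : ℕ) : ℤ) + 1)) else 0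

lemma DE_eq_one (n : ℕ) (z : ℂ) (hz0 : z ≠ 0) :
    (z • (1 : Matrix (Fin n) (Fin n) ℂ) - Nmat n) * Emat n z = 1 := by
  ext i k
  rw [Matrix.mul_apply]
  have hterm : ∀ m : Fin n,
      (z • (1 : Matrix (Fin n) (Fin n) ℂ) - Nmat n) i m * Emat n z m k
      = (if i = m then z else 0) * Emat n z m k
        - (if (m : ℕ) = (i : ℕ) + 1 then 1 else 0) * Emat n z m k := by
    intro m
    simp [Nmat, Matrix.one_apply, sub_mul, mul_ite]
  rw [Finset.sum_congr rfl fun m _ => hterm m, Finset.sum_sub_distrib]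
  have h1 : ∑ m : Fin n, (if i = m then z else 0) * Emat n z m k = z * Emat n z i k := by
    simp [Finset.sum_ite_eq]
  rw [h1]
  by_cases h : (i : ℕ) + 1 < n
  · have h2 : ∑ m : Fin n, (if (m : ℕ) = (i : ℕ) + 1 then (1:ℂ) else 0) * Emat n z m k
        = Emat n z ⟨(i : ℕ) + 1, h⟩ k := by
      have : ∀ m : Fin n, ((m : ℕ) = (i : ℕ) + 1) = (m = ⟨(i : ℕ) + 1, h⟩) := by
        intro m; simp [Fin.ext_iff]
    -- use it
      simp only [this]
      simp [Finset.sum_ite_eq']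
    rw [h2]
    rcases lt_trichotomy (i : ℕ) (k : ℕ) with hik | hik | hik
    · have hne : i ≠ k := by intro e; rw [e] at hik; exact lt_irrefl _ hik
      rw [Matrix.one_apply_ne hne]
      simp only [Emat, Matrix.of_apply]
      rw [if_pos (le_of_lt hik), if_pos (by simpa using hik)]
      rw [mul_comm, ← zpow_add_one₀ hz0]
      rw [show -(((k : ℕ) : ℤ) - ((i : ℕ) : ℤ) + 1) + 1
          = -(((k : ℕ) : ℤ) - (((i : ℕ) + 1 : ℕ) : ℤ) + 1) by push_cast; ring]
      exact sub_self _
    · have he : i = k := Fin.ext hik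
      subst he
      rw [Matrix.one_apply_eq]
      simp only [Emat, Matrix.of_apply]
      rw [if_pos le_rfl, if_neg (by omega)]
      simp only [sub_zero]
      rw [show (-(((i : ℕ) : ℤ) - ((i : ℕ) : ℤ) + 1)) = -1 by ring]
      field_simp
    · have hne : i ≠ k := by intro e; rw [e] at hik; exact lt_irrefl _ hik
      rw [Matrix.one_apply_ne hne]
      simp only [Emat, Matrix.of_apply]
      rw [if_neg (by omega), if_neg (by omega)]
      ring
  · have h2 : ∑ m : Fin n, (if (m : ℕ) = (i : ℕ) + 1 then (1:ℂ) else 0) * Emat n z m k = 0 := by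
      apply Finset.sum_eq_zero
      intro m _
      rw [if_neg (by omega)]
      ring
    rw [h2, sub_zero]
    have hik : (k : ℕ) ≤ (i : ℕ) := by omega
    rcases eq_or_lt_of_le hik with he | hlt
    · have he' : i = k := Fin.ext he.symm
      subst he'
      rw [Matrix.one_apply_eq]
      simp only [Emat, Matrix.of_apply, if_pos le_rfl]
      rw [show (-(((i : ℕ) : ℤ) - ((i : ℕ) : ℤ) + 1)) = -1 by ring]
      field_simp
    · have hne : i ≠ k := by intro e; rw [e] at hlt; exact lt_irrefl _ hlt
      rw [Matrix.one_apply_ne hne]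
      simp only [Emat, Matrix.of_apply]
      rw [if_neg (by omega)]
      ring

/-- for `1 ≤ j ≤ n`, `z ≠ 0` and `zI - A_p` invertible,
`C_{d,j} (zI - Ã)⁻¹ B̃ = z^{-j}`. -/
theorem lifted_delay_rows (np n : ℕ) (hn : 1 ≤ n) (j : ℕ) (hj1 : 1 ≤ j) (hjn : j ≤ n)
    (Ap : Matrix (Fin np) (Fin np) ℝ) (Bp : Matrix (Fin np) (Fin 1) ℝ)
    (z : ℂ) (hz0 : z ≠ 0)
    (hz : IsUnit (z • (1 : Matrix (Fin np) (Fin np) ℂ) - Ap.map Complex.ofReal)) :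
    (((Cdrow np n j).map Complex.ofReal) *
        (z • (1 : Matrix (Fin np ⊕ Fin n) (Fin np ⊕ Fin n) ℂ)
          - (Atil np n Ap Bp).map Complex.ofReal)⁻¹ *
        ((Btil np n).map Complex.ofReal)) 0 0 = z ^ (-(j : ℤ)) := by
  set A' := z • (1 : Matrix (Fin np) (Fin np) ℂ) - Ap.map Complex.ofReal with hA'
  set D' := z • (1 : Matrix (Fin n) (Fin n) ℂ) - Nmat n with hD'
  set Bc : Matrix (Fin np) (Fin n) ℂ :=
    Matrix.of fun i (k : Fin n) => if (k : ℕ) = 0 then -(Bp i 0 : ℂ) else 0 with hBc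
  have hM : (z • (1 : Matrix (Fin np ⊕ Fin n) (Fin np ⊕ Fin n) ℂ)
      - (Atil np n Ap Bp).map Complex.ofReal) = Matrix.fromBlocks A' Bc 0 D' := by
    ext (i | i) (k | k) <;>
      simp [hA', hBc, hD', Atil, Nmat, Matrix.fromBlocks, Matrix.one_apply,
        Matrix.map_apply, Matrix.sub_apply, Matrix.smul_apply, Matrix.one_apply,
        apply_ite Complex.ofReal, apply_ite (z * ·), Fin.ext_iff, Sum.elim_inl, Sum.elim_inr] <;>
      try (split <;> simp)
  have hDunit : IsUnit D' := (Matrix.isUnit_iff_isUnit_det _).mpr (Matrix.isUnit_det_of_right_inverse (DE_eq_one n z hz0))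
  have hDinv : D'⁻¹ = Emat n z := Matrix.inv_eq_right_inv (DE_eq_one n z hz0)
  rw [hM, Matrix.inv_fromBlocks_zero₂₁_of_isUnit_iff A' Bc D' (iff_of_true hz hDunit), hDinv]
  have hr1 : n - j < n := by omega
  have hr2 : n - 1 < n := by omega
  set r1 : Fin n := ⟨n - j, hr1⟩
  set r2 : Fin n := ⟨n - 1, hr2⟩
  have key : (((Cdrow np n j).map Complex.ofReal) *
      Matrix.fromBlocks A'⁻¹ (-(A'⁻¹ * Bc * (Emat n z))) 0 (Emat n z) *
      ((Btil np n).map Complex.ofReal)) 0 0 = Emat n z r1 r2 := by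
    rw [Matrix.mul_apply]
    rw [Fintype.sum_sum_type]
    have hB1 : ∀ p : Fin np, ((Btil np n).map Complex.ofReal) (Sum.inl p) 0 = 0 := by
      intro p; simp [Btil]
    have hB2 : ∀ r : Fin n,
        ((Btil np n).map Complex.ofReal) (Sum.inr r) 0 = if r = r2 then 1 else 0 := by
      intro r; simp [Btil, Fin.ext_iff, r2, apply_ite Complex.ofReal]
    simp only [hB1, hB2, mul_zero, Finset.sum_const_zero, zero_add, mul_ite, mul_one,
      Finset.sum_ite_eq', Finset.mem_univ, if_true]
    rw [Matrix.mul_apply, Fintype.sum_sum_type]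
    have hC1 : ∀ p : Fin np, ((Cdrow np n j).map Complex.ofReal) 0 (Sum.inl p) = 0 := by
      intro p; simp [Cdrow]
    have hC2 : ∀ s : Fin n,
        ((Cdrow np n j).map Complex.ofReal) 0 (Sum.inr s) = if s = r1 then 1 else 0 := by
      intro s; simp [Cdrow, Fin.ext_iff, r1, apply_ite Complex.ofReal]
    simp only [hC1, hC2, zero_mul, Finset.sum_const_zero, zero_add, ite_mul, one_mul,
      Finset.sum_ite_eq, Finset.mem_univ, if_true]
    simp [Matrix.fromBlocks]
  rw [key]
  simp only [Emat, Matrix.of_apply, r1, r2]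
  rw [if_pos (by omega)]
  congr 1
  have h1 : ((n - 1 : ℕ) : ℤ) = (n : ℤ) - 1 := by omega
  have h2 : ((n - j : ℕ) : ℤ) = (n : ℤ) - j := by omega
  rw [h1, h2]; ring
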